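/- arXiv:1707.02126 — 4 statements merged into one kernel-verified Lean document; each statement's English description precedes it below -/
import Mathlib

section
/- Let n ≥ p ≥ 1, let X ∈ ℝ^{n×p} satisfy XᵀX = I_p, and let G ∈ ℝ^{n×p}. Then for every Z ∈ ℝ^{n×p} with ZᵀX + XᵀZ = 0, one has tr((G − X Gᵀ X)ᵀ (I_n − (1/2) X Xᵀ) Z) = tr(Gᵀ Z). In other words, G − X Gᵀ X represents the linear functional Z ↦ tr(Gᵀ Z) on the tangent space with respect to the canonical metric. -/
open Matrix

/-- `G - X Gᵀ X` represents the linear functional `Z ↦ tr(Gᵀ Z)` on the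
tangent space with respect to the canonical metric. -/
theorem canonical_gradient_represents (n p : ℕ) (hp : 1 ≤ p) (hpn : p ≤ n)
    (X G : Matrix (Fin n) (Fin p) ℝ) (hX : Xᵀ * X = 1) :
    ∀ Z : Matrix (Fin n) (Fin p) ℝ, Zᵀ * X + Xᵀ * Z = 0 →
      Matrix.trace ((G - X * Gᵀ * X)ᵀ * ((1 : Matrix (Fin n) (Fin n) ℝ)
        - (1/2 : ℝ) • (X * Xᵀ)) * Z) = Matrix.trace (Gᵀ * Z) := by
  intro Z hZ
  have h : Xᵀ * Z = -(Zᵀ * X) := eq_neg_of_add_eq_zero_right hZ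
  have key : Matrix.trace (Gᵀ * X * (Zᵀ * X)) = -Matrix.trace (Xᵀ * G * (Zᵀ * X)) := by
    calc Matrix.trace (Gᵀ * X * (Zᵀ * X))
        = Matrix.trace ((Gᵀ * X * (Zᵀ * X))ᵀ) := (Matrix.trace_transpose _).symm
      _ = Matrix.trace (Xᵀ * Z * (Xᵀ * G)) := by
          simp [Matrix.transpose_mul, Matrix.mul_assoc]
      _ = Matrix.trace (Xᵀ * G * (Xᵀ * Z)) := Matrix.trace_mul_comm _ _
      _ = -Matrix.trace (Xᵀ * G * (Zᵀ * X)) := by rw [h]; simp [Matrix.mul_neg]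
  have e1 : (G - X * Gᵀ * X)ᵀ = Gᵀ - Xᵀ * G * Xᵀ := by
    simp [Matrix.transpose_sub, Matrix.transpose_mul, Matrix.mul_assoc]
  rw [e1]
  have expand : (Gᵀ - Xᵀ * G * Xᵀ) * ((1 : Matrix (Fin n) (Fin n) ℝ)
      - (1/2 : ℝ) • (X * Xᵀ)) * Z
      = Gᵀ * Z - (1/2 : ℝ) • (Gᵀ * X * (Xᵀ * Z))
        - (Xᵀ * G * (Xᵀ * Z)) + (1/2 : ℝ) • (Xᵀ * G * (Xᵀ * Z)) := by
    have hx : Xᵀ * G * Xᵀ * (X * Xᵀ) = Xᵀ * G * Xᵀ := by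
      calc Xᵀ * G * Xᵀ * (X * Xᵀ) = Xᵀ * G * ((Xᵀ * X) * Xᵀ) := by
            simp [Matrix.mul_assoc]
        _ = Xᵀ * G * Xᵀ := by rw [hX]; simp
    simp only [Matrix.mul_sub, Matrix.sub_mul, Matrix.mul_one, Matrix.mul_smul,
      Matrix.smul_mul, hx]
    simp [Matrix.mul_assoc]
    module
  rw [expand]
  simp only [Matrix.trace_add, Matrix.trace_sub, Matrix.trace_smul, h,
    Matrix.mul_neg, Matrix.trace_neg, key, smul_eq_mul]
  ring
end

section
/- Let n ≥ p ≥ 1, X ∈ ℝ^{n×p} with XᵀX = I_p, and let Q ∈ ℝ^{n×n} be orthogonal (QᵀQ = I_n) with first p columns equal to X. Define the family Λ consisting of U_{ij} = Q(E_{ij} − E_{ji}) for 1 ≤ i < j ≤ p and U_{ij} = Q E_{ij} for p < i ≤ n, 1 ≤ j ≤ p, where E_{ij} ∈ ℝ^{n×p} is the matrix with (i,j) entry 1 and zeros elsewhere. Then every member of Λ lies in the tangent space T_X = {Z : ZᵀX + XᵀZ = 0}, and Λ is orthonormal with respect to the canonical metric: g(U_{ij}, U_{kl}) = 1 if (i,j)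 = (k,l) and g(U_{ij}, U_{kl}) = 0 for distinct index pairs in Λ. -/
open Matrix

/-- Basis element `Q(E_{ij} - E_{ji})` for `i < j ≤ p`. -/
def stiefelBasis₁ {n p : ℕ} (hpn : p ≤ n) (Q : Matrix (Fin n) (Fin n) ℝ)
    (i j : Fin p) : Matrix (Fin n) (Fin p) ℝ :=
  Q * (Matrix.single (Fin.castLE hpn i) j (1 : ℝ)
    - Matrix.single (Fin.castLE hpn j) i (1 : ℝ))

/-- Basis element `Q E_{ij}` for `i > p`. -/
def stiefelBasis₂ {n p : ℕ} (Q : Matrix (Fin n) (Fin n) ℝ)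
    (i : Fin n) (j : Fin p) : Matrix (Fin n) (Fin p) ℝ :=
  Q * Matrix.single i j (1 : ℝ)

/-- Canonical metric `g(Z₁,Z₂) = tr(Z₁ᵀ (I - ½ X Xᵀ) Z₂)` at `X`. -/
noncomputable def canonicalMetric {n p : ℕ} (X Z₁ Z₂ : Matrix (Fin n) (Fin p) ℝ) : ℝ :=
  Matrix.trace (Z₁ᵀ * ((1 : Matrix (Fin n) (Fin n) ℝ) - (1/2 : ℝ) • (X * Xᵀ)) * Z₂)

/-!
Since the first `p` columns of the orthogonal matrix `Q` are `X`, we have `Xᵀ (Q A) = A'`, where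
`A'` consists of the first `p` rows of `A`. Hence `(Q A)ᵀ X + Xᵀ (Q A) = A'ᵀ + A'` and
`g(Q A, Q B) = tr(AᵀB) - ½ tr(A'ᵀB')`. For `A = E_{ij} - E_{ji}` the matrix `A'` is the skew
matrix `E_{ij} - E_{ji}` of size `p`, and both traces equal `2δ`; for `A = E_{ij}` with `i > p`
we get `A' = 0`.
-/

namespace Matrix

variable {m ι κ R : Type*}

section Single

variable [DecidableEq m] [DecidableEq κ]

theorem submatrix_single_of_injective [DecidableEq ι] [Zero R] {e : ι → m}
    (he : Function.Injective e) (i : ι) (j : κ) (a : R) :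
    (single (e i) j a).submatrix e id = single i j a := by
  ext; simp [single_apply, he.eq_iff]

theorem submatrix_single_of_notMem_range [Zero R] {e : ι → m} {k : m} (hk : k ∉ Set.range e)
    (j : κ) (a : R) : (single k j a).submatrix e id = 0 := by
  ext a _
  simp only [submatrix_apply, single_apply, zero_apply, id_eq, ite_eq_right_iff, and_imp]
  exact fun h => absurd ⟨a, h.symm⟩ hk

variable [Fintype m] [Fintype κ]

theorem trace_transpose_single_mul_single [NonAssocSemiring R] (a c : m) (b d : κ) :
    trace ((single a b (1 : R))ᵀ * single c d (1 : R)) = if a = c ∧ b = d then 1 else 0 := by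
  simp [transpose_single, trace_single_mul, single_apply, eq_comm]

theorem trace_transpose_mul_single_sub_single [Ring R] [LinearOrder κ] {e : κ → m}
    (he : Function.Injective e) {i j k l : κ} (hij : i < j) (hkl : k < l) :
    trace ((single (e i) j (1 : R) - single (e j) i 1)ᵀ *
        (single (e k) l (1 : R) - single (e l) k 1)) = 2 * if i = k ∧ j = l then 1 else 0 := by
  simp only [transpose_sub, Matrix.sub_mul, Matrix.mul_sub, trace_sub,
    trace_transpose_single_mul_single, he.eq_iff]
  split_ifs <;> grind

end Single

section Orthogonal

variable [Fintype m] [DecidableEq m] [CommRing R] {Q : Matrix m m R} (hQ : Qᵀ * Q = 1)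
include hQ

theorem transpose_mul_mul_of_orthogonal (A B : Matrix m κ R) :
    (Q * A)ᵀ * (Q * B) = Aᵀ * B := by
  rw [transpose_mul, Matrix.mul_assoc, ← Matrix.mul_assoc Qᵀ, hQ, Matrix.one_mul]

theorem transpose_submatrix_mul_orthogonal (e : ι → m) (A : Matrix m κ R) :
    (Q.submatrix id e)ᵀ * (Q * A) = A.submatrix e id := by
  change (Qᵀ * (Q * A)).submatrix e id = _
  rw [← Matrix.mul_assoc, hQ, Matrix.one_mul]

theorem transpose_mul_add_transpose_mul_of_orthogonal (e : ι → m) (A : Matrix m ι R) :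
    (Q * A)ᵀ * Q.submatrix id e + (Q.submatrix id e)ᵀ * (Q * A)
      = (A.submatrix e id)ᵀ + A.submatrix e id := by
  rw [← transpose_submatrix_mul_orthogonal hQ, ← transpose_transpose (Q.submatrix id e),
    ← transpose_mul, transpose_transpose]

end Orthogonal

end Matrix

theorem canonicalMetric_eq_trace_sub {n p : ℕ} (X Z₁ Z₂ : Matrix (Fin n) (Fin p) ℝ) :
    canonicalMetric X Z₁ Z₂
      = trace (Z₁ᵀ * Z₂) - 1 / 2 * trace ((Xᵀ * Z₁)ᵀ * (Xᵀ * Z₂)) := by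
  rw [canonicalMetric, Matrix.mul_sub, Matrix.sub_mul, Matrix.mul_one, trace_sub, Matrix.mul_smul,
    Matrix.smul_mul, trace_smul, smul_eq_mul, transpose_mul, transpose_transpose]
  simp only [Matrix.mul_assoc]

theorem canonicalMetric_orthogonal_mul {n p : ℕ} {Q : Matrix (Fin n) (Fin n) ℝ}
    (hQ : Qᵀ * Q = 1) (e : Fin p → Fin n) (A B : Matrix (Fin n) (Fin p) ℝ) :
    canonicalMetric (Q.submatrix id e) (Q * A) (Q * B)
      = trace (Aᵀ * B) - 1 / 2 * trace ((A.submatrix e id)ᵀ * B.submatrix e id) := by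
  rw [canonicalMetric_eq_trace_sub, transpose_mul_mul_of_orthogonal hQ,
    transpose_submatrix_mul_orthogonal hQ, transpose_submatrix_mul_orthogonal hQ]

theorem stiefel_basis_orthonormal_general (n p : ℕ) (hpn : p ≤ n)
    (X : Matrix (Fin n) (Fin p) ℝ)
    (Q : Matrix (Fin n) (Fin n) ℝ) (hQ : Qᵀ * Q = 1)
    (hQX : ∀ (i : Fin n) (j : Fin p), Q i (Fin.castLE hpn j) = X i j) :
    (∀ i j : Fin p, i < j →
      (stiefelBasis₁ hpn Q i j)ᵀ * X + Xᵀ * (stiefelBasis₁ hpn Q i j) = 0) ∧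
    (∀ (i : Fin n) (j : Fin p), p ≤ (i : ℕ) →
      (stiefelBasis₂ Q i j)ᵀ * X + Xᵀ * (stiefelBasis₂ Q i j) = 0) ∧
    (∀ i j k l : Fin p, i < j → k < l →
      canonicalMetric X (stiefelBasis₁ hpn Q i j) (stiefelBasis₁ hpn Q k l)
        = if i = k ∧ j = l then 1 else 0) ∧
    (∀ (i k : Fin n) (j l : Fin p), p ≤ (i : ℕ) → p ≤ (k : ℕ) →
      canonicalMetric X (stiefelBasis₂ Q i j) (stiefelBasis₂ Q k l)
        = if i = k ∧ j = l then 1 else 0) ∧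
    (∀ (i j : Fin p) (k : Fin n) (l : Fin p), i < j → p ≤ (k : ℕ) →
      canonicalMetric X (stiefelBasis₁ hpn Q i j) (stiefelBasis₂ Q k l) = 0) := by
  obtain rfl : X = Q.submatrix id (Fin.castLE hpn) := by ext; exact (hQX _ _).symm
  have he := Fin.castLE_injective hpn
  have hrange (k : Fin n) (hk : p ≤ (k : ℕ)) : k ∉ Set.range (Fin.castLE hpn) := by
    rintro ⟨i, rfl⟩
    exact absurd hk (by simp)
  refine ⟨fun i j _ => ?_, fun i j hi => ?_, fun i j k l hij hkl => ?_,
    fun i k j l hi hk => ?_, fun i j k l hij hk => ?_⟩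
  · rw [stiefelBasis₁, transpose_mul_add_transpose_mul_of_orthogonal hQ]
    simp only [submatrix_sub, Pi.sub_apply, submatrix_single_of_injective he, transpose_sub,
      transpose_single]
    abel
  · rw [stiefelBasis₂, transpose_mul_add_transpose_mul_of_orthogonal hQ,
      submatrix_single_of_notMem_range (hrange i hi), transpose_zero, add_zero]
  · rw [stiefelBasis₁, stiefelBasis₁, canonicalMetric_orthogonal_mul hQ]
    -- `e := fun i => i` rather than `id`, so that the rows read `single i j 1` after beta reduction
    simp only [submatrix_sub, Pi.sub_apply, submatrix_single_of_injective he,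
      trace_transpose_mul_single_sub_single he hij hkl,
      trace_transpose_mul_single_sub_single (e := fun i => i) Function.injective_id hij hkl]
    ring
  · rw [stiefelBasis₂, stiefelBasis₂, canonicalMetric_orthogonal_mul hQ,
      submatrix_single_of_notMem_range (hrange i hi), trace_transpose_single_mul_single]
    simp
  · have hik : Fin.castLE hpn i ≠ k := fun h => hrange k hk ⟨i, h⟩
    have hjk : Fin.castLE hpn j ≠ k := fun h => hrange k hk ⟨j, h⟩
    rw [stiefelBasis₁, stiefelBasis₂, canonicalMetric_orthogonal_mul hQ,
      submatrix_single_of_notMem_range (hrange k hk)]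
    simp [transpose_sub, Matrix.sub_mul, hik, hjk]

/-- The family `Λ` consisting of `Q(E_{ij} - E_{ji})` for `i < j ≤ p` and
`Q E_{ij}` for `i > p` lies in the tangent space at `X` and is orthonormal with respect
to the canonical metric. -/
theorem stiefel_basis_orthonormal (n p : ℕ) (hp : 1 ≤ p) (hpn : p ≤ n)
    (X : Matrix (Fin n) (Fin p) ℝ) (hX : Xᵀ * X = 1)
    (Q : Matrix (Fin n) (Fin n) ℝ) (hQ : Qᵀ * Q = 1)
    (hQX : ∀ (i : Fin n) (j : Fin p), Q i (Fin.castLE hpn j) = X i j) :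
    (∀ i j : Fin p, i < j →
      (stiefelBasis₁ hpn Q i j)ᵀ * X + Xᵀ * (stiefelBasis₁ hpn Q i j) = 0) ∧
    (∀ (i : Fin n) (j : Fin p), p ≤ (i : ℕ) →
      (stiefelBasis₂ Q i j)ᵀ * X + Xᵀ * (stiefelBasis₂ Q i j) = 0) ∧
    (∀ i j k l : Fin p, i < j → k < l →
      canonicalMetric X (stiefelBasis₁ hpn Q i j) (stiefelBasis₁ hpn Q k l)
        = if i = k ∧ j = l then 1 else 0) ∧
    (∀ (i k : Fin n) (j l : Fin p), p ≤ (i : ℕ) → p ≤ (k : ℕ) →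
      canonicalMetric X (stiefelBasis₂ Q i j) (stiefelBasis₂ Q k l)
        = if i = k ∧ j = l then 1 else 0) ∧
    (∀ (i j : Fin p) (k : Fin n) (l : Fin p), i < j → p ≤ (k : ℕ) →
      canonicalMetric X (stiefelBasis₁ hpn Q i j) (stiefelBasis₂ Q k l) = 0) :=
  stiefel_basis_orthonormal_general n p hpn X Q hQ hQX
end

section
/- Let n ≥ p ≥ 1, α = √2/2, β = 1 − √2/2, and let Y ∈ ℝ^{n×p} satisfy YᵀY = I_p. For δ, σ ∈ ℝ and G, B ∈ ℝ^{n×p}, set Z = −δ G + σ (I_n − β Y Yᵀ) B and A = Z Yᵀ − Y Zᵀ. Then A Y = −δ (G − Y Gᵀ Y) + σ (B − α Y Bᵀ Y − β Y Yᵀ B), i.e. A Y equals the scaled Riemannian gradient step −δ ∇_M F plus σ times the projection P_Y(B) of B onto the tangent space. -/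
open Matrix

/-- with `Z = -δ G + σ (I - β Y Yᵀ) B` and `A = Z Yᵀ - Y Zᵀ`, one has
`A Y = -δ (G - Y Gᵀ Y) + σ (B - α Y Bᵀ Y - β Y Yᵀ B)`, i.e. the scaled Riemannian
gradient step plus `σ` times the tangent-space projection of `B`
(`α = √2/2`, `β = 1 - √2/2`). -/
theorem scheme_tangent_step (n p : ℕ) (hp : 1 ≤ p) (hpn : p ≤ n)
    (Y : Matrix (Fin n) (Fin p) ℝ) (hY : Yᵀ * Y = 1)
    (δ σ : ℝ) (G B : Matrix (Fin n) (Fin p) ℝ)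
    (Z : Matrix (Fin n) (Fin p) ℝ)
    (hZ : Z = (-δ) • G
      + σ • (((1 : Matrix (Fin n) (Fin n) ℝ) - (1 - Real.sqrt 2 / 2) • (Y * Yᵀ)) * B))
    (A : Matrix (Fin n) (Fin n) ℝ) (hA : A = Z * Yᵀ - Y * Zᵀ) :
    A * Y = (-δ) • (G - Y * Gᵀ * Y)
      + σ • (B - (Real.sqrt 2 / 2) • (Y * Bᵀ * Y)
        - (1 - Real.sqrt 2 / 2) • (Y * Yᵀ * B)) := by
  have hYY : ∀ M : Matrix (Fin p) (Fin p) ℝ, Yᵀ * (Y * M) = M := by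
    intro M; rw [← Matrix.mul_assoc, hY, Matrix.one_mul]
  subst hZ hA
  simp only [Matrix.sub_mul, Matrix.add_mul, Matrix.mul_sub, Matrix.mul_add,
    Matrix.smul_mul, Matrix.mul_smul, Matrix.one_mul, transpose_add, transpose_smul,
    transpose_sub, transpose_mul, transpose_transpose, transpose_one, smul_sub, smul_add,
    Matrix.mul_assoc, hY, Matrix.mul_one, hYY]
  have h2 : (1 : ℝ) - Real.sqrt 2 / 2 = 1 - Real.sqrt 2 / 2 := rfl
  module
end

section
/- Let Z, Y ∈ ℝ^{n×p}, and form the block matrices U = [Z, Y] ∈ ℝ^{n×2p} and V = [Y, −Z] ∈ ℝ^{n×2p}, so that A := U Vᵀ = Z Yᵀ − Y Zᵀ. If I_{2p} − (1/2) Vᵀ U is invertible, then I_n − (1/2) A is invertible and (I_n − (1/2)A)⁻¹ (I_n + (1/2)A) Y = Y + U (I_{2p} − (1/2) Vᵀ U)⁻¹ Vᵀ Y. -/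
open Matrix

/-!
The push-through identity `U (1 - W U) = (1 - U W) U` shows that
`1 + U (1 - W U)⁻¹ W` is a right inverse of `1 - U W`, so inverting the `n × n` matrix
`1 - U W` reduces to inverting the `2p × 2p` matrix `1 - W U`. The Cayley factor is then
`(1 - A)⁻¹ (1 + A) = 2 (1 - A)⁻¹ - 1`, and with `A = ½ U Vᵀ` the factor `2` cancels the `½`.
-/

namespace Matrix

theorem fromCols_mul_transpose_fromCols {R m n p₁ p₂ : Type*} [Semiring R]
    [Fintype p₁] [Fintype p₂] (A₁ : Matrix m p₁ R) (A₂ : Matrix m p₂ R)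
    (B₁ : Matrix n p₁ R) (B₂ : Matrix n p₂ R) :
    fromCols A₁ A₂ * (fromCols B₁ B₂)ᵀ = A₁ * B₁ᵀ + A₂ * B₂ᵀ := by
  rw [transpose_fromCols, fromCols_mul_fromRows]

variable {m k R : Type*} [Fintype m] [DecidableEq m] [Fintype k] [DecidableEq k] [CommRing R]

theorem mul_one_sub_mul_comm (U : Matrix m k R) (W : Matrix k m R) :
    U * (1 - W * U) = (1 - U * W) * U := by
  rw [Matrix.mul_sub, Matrix.sub_mul, Matrix.mul_one, Matrix.one_mul, Matrix.mul_assoc]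

theorem one_sub_mul_mul_one_add_mul_inv_mul {U : Matrix m k R} {W : Matrix k m R}
    (h : IsUnit (1 - W * U)) :
    (1 - U * W) * (1 + U * (1 - W * U)⁻¹ * W) = 1 := by
  rw [Matrix.mul_add, Matrix.mul_one, ← Matrix.mul_assoc, ← Matrix.mul_assoc,
    ← mul_one_sub_mul_comm, Matrix.mul_assoc U,
    mul_nonsing_inv _ ((isUnit_iff_isUnit_det _).mp h), Matrix.mul_one, sub_add_cancel]

theorem isUnit_one_sub_mul_comm {U : Matrix m k R} {W : Matrix k m R}
    (h : IsUnit (1 - W * U)) : IsUnit (1 - U * W) :=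
  .of_mul_eq_one _ (one_sub_mul_mul_one_add_mul_inv_mul h)

theorem inv_one_sub_mul {U : Matrix m k R} {W : Matrix k m R} (h : IsUnit (1 - W * U)) :
    (1 - U * W)⁻¹ = 1 + U * (1 - W * U)⁻¹ * W :=
  inv_eq_right_inv (one_sub_mul_mul_one_add_mul_inv_mul h)

theorem inv_one_sub_mul_one_add {A : Matrix m m R} (h : IsUnit (1 - A)) :
    (1 - A)⁻¹ * (1 + A) = 2 • (1 - A)⁻¹ - 1 := by
  have h_add : 1 + A = 2 • 1 - (1 - A) := by rw [two_nsmul]; abel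
  rw [h_add, Matrix.mul_sub, Matrix.mul_smul, Matrix.mul_one,
    nonsing_inv_mul _ ((isUnit_iff_isUnit_det _).mp h)]

theorem inv_one_sub_mul_mul_one_add_mul {U : Matrix m k R} {W : Matrix k m R}
    (h : IsUnit (1 - W * U)) :
    (1 - U * W)⁻¹ * (1 + U * W) = 1 + 2 • (U * (1 - W * U)⁻¹ * W) := by
  rw [inv_one_sub_mul_one_add (isUnit_one_sub_mul_comm h), inv_one_sub_mul h, smul_add,
    two_nsmul (1 : Matrix m m R)]
  abel

end Matrix

/-- Sherman–Morrison–Woodbury form of the Cayley update. With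
`U = [Z, Y]`, `V = [Y, -Z]`, so `U Vᵀ = Z Yᵀ - Y Zᵀ =: A`, if `I_{2p} - ½ Vᵀ U` is
invertible then `I_n - ½ A` is invertible and
`(I - ½A)⁻¹ (I + ½A) Y = Y + U (I_{2p} - ½ Vᵀ U)⁻¹ Vᵀ Y`. -/
theorem cayley_smw (n p : ℕ) (Z Y : Matrix (Fin n) (Fin p) ℝ)
    (U V : Matrix (Fin n) (Fin p ⊕ Fin p) ℝ)
    (hU : U = Matrix.fromCols Z Y) (hV : V = Matrix.fromCols Y (-Z))
    (hInv : IsUnit ((1 : Matrix (Fin p ⊕ Fin p) (Fin p ⊕ Fin p) ℝ)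
      - (1/2 : ℝ) • (Vᵀ * U))) :
    U * Vᵀ = Z * Yᵀ - Y * Zᵀ ∧
    IsUnit ((1 : Matrix (Fin n) (Fin n) ℝ) - (1/2 : ℝ) • (U * Vᵀ)) ∧
    ((1 : Matrix (Fin n) (Fin n) ℝ) - (1/2 : ℝ) • (U * Vᵀ))⁻¹
        * (((1 : Matrix (Fin n) (Fin n) ℝ) + (1/2 : ℝ) • (U * Vᵀ)) * Y)
      = Y + U * (((1 : Matrix (Fin p ⊕ Fin p) (Fin p ⊕ Fin p) ℝ)
          - (1/2 : ℝ) • (Vᵀ * U))⁻¹ * (Vᵀ * Y)) := by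
  have hA : U * Vᵀ = Z * Yᵀ - Y * Zᵀ := by
    rw [hU, hV, fromCols_mul_transpose_fromCols, transpose_neg, Matrix.mul_neg, sub_eq_add_neg]
  have hUV : (1/2 : ℝ) • (U * Vᵀ) = ((1/2 : ℝ) • U) * Vᵀ := (Matrix.smul_mul _ _ _).symm
  have hVU : (1/2 : ℝ) • (Vᵀ * U) = Vᵀ * ((1/2 : ℝ) • U) := (Matrix.mul_smul _ _ _).symm
  rw [hVU] at hInv ⊢
  rw [hUV]
  refine ⟨hA, isUnit_one_sub_mul_comm hInv, ?_⟩
  rw [← Matrix.mul_assoc, inv_one_sub_mul_mul_one_add_mul hInv]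
  simp only [Matrix.add_mul, Matrix.one_mul, Matrix.smul_mul, Matrix.mul_assoc]
  rw [two_nsmul, ← add_smul]
  norm_num
end
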